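/- Let G = N ⋊ T. Then Q_2(G,T) := I(G)I(T)/I(G)^2 I(T) is naturally isomorphic to U_2L(T) ⊕ (N^{AB} ⊗ T^{ab}), where U_2L(T) is the degree-2 part of the enveloping algebra of the Lie ring of T associated with its lower central series, N^{AB} = N/[N,G], and T^{ab} = T/[T,T]. -/

import Mathlib

open MonoidAlgebra TensorProduct

/-- The ℤ-submodule of `ℤ[G]` generated by the elements `h - 1`, `h ∈ H`. -/
noncomputable def relAug (G : Type*) [Group G] (H : Subgroup G) :
    Submodule ℤ (MonoidAlgebra ℤ G) :=
  Submodule.span ℤ {x | ∃ h ∈ H, x = MonoidAlgebra.of ℤ G h - 1}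

/-- The augmentation ideal `I(G)` of `ℤ[G]`, as a ℤ-submodule. -/
noncomputable def augI (G : Type*) [Group G] : Submodule ℤ (MonoidAlgebra ℤ G) :=
  Submodule.span ℤ {x | ∃ g : G, x = MonoidAlgebra.of ℤ G g - 1}

/-!
Write `g = ν(g) π(g)` with `ν(g) ∈ N`, `π(g) ∈ T`. The ring endomorphism of `ℤ[G]` induced
by `π` fixes `I(T)` and maps `I(G)` into `I(T)`, so it induces `Q₂(G,T) → I(T)²/I(T)³`,
split by the inclusion. Since `α` kills `[N,G]`, `δ = α ∘ ν` is a homomorphism `G → A`;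
the linear map `g ↦ δ(g) ⊗ [π(g)]` sends `x(t - 1)` to `D(x) ⊗ [t]`, where `D` is the
linear extension of `δ`, so it kills `I(G)²I(T)` and gives `Q₂(G,T) → A ⊗ T^ab`.
Conversely `(g, t) ↦ (g - 1)(t - 1)` is biadditive modulo `I(G)²I(T)`, hence factors
through `G^ab ⊗ T^ab`, and precomposing with `A → G^ab` (induced by `N → G^ab`, as
`ker α = [N,G] ≤ [G,G]`) gives `A ⊗ T^ab → Q₂(G,T)`. On generators the two maps are
inverse because `(g - 1)(t - 1) ≡ (π(g) - 1)(t - 1) + (ν(g) - 1)(t - 1)` modulo `I(G)²I(T)`.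
-/

section Subquot

variable {M M' M'' : Type*} [AddCommGroup M] [AddCommGroup M'] [AddCommGroup M'']

-- Everything is over ℤ so that all module structures are `AddCommGroup.toIntModule`, the
-- instance chosen in the statement, rather than e.g. `Submodule.Quotient.module`.
abbrev Subquot (P P' : Submodule ℤ M) : Type _ := ↥P ⧸ P'.comap P.subtype

namespace Subquot

variable {P P' : Submodule ℤ M} {Q Q' : Submodule ℤ M'}

def mk (P' : Submodule ℤ M) {x : M} (hx : x ∈ P) : Subquot P P' :=
  Submodule.Quotient.mk ⟨x, hx⟩

lemma mk_add {x y : M} (hx : x ∈ P) (hy : y ∈ P) :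
    mk P' hx + mk P' hy = mk P' (add_mem hx hy) := rfl

lemma mk_congr {x y : M} (hx : x ∈ P) (hy : y ∈ P) (h : x = y) : mk P' hx = mk P' hy := by
  subst h; rfl

lemma mk_eq_mk_iff {x y : M} (hx : x ∈ P) (hy : y ∈ P) :
    mk P' hx = mk P' hy ↔ x - y ∈ P' :=
  Submodule.Quotient.eq _

lemma mk_eq_zero_iff {x : M} (hx : x ∈ P) : mk P' hx = 0 ↔ x ∈ P' :=
  Submodule.Quotient.mk_eq_zero _

lemma hom_ext_span {s : Set M} (hs : Submodule.span ℤ s = P) {f g : Subquot P P' →ₗ[ℤ] M''}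
    (h : ∀ x ∈ s, ∀ hx : x ∈ P, f (mk P' hx) = g (mk P' hx)) : f = g := by
  subst hs
  refine Submodule.linearMap_qext _ (LinearMap.ext_on Submodule.span_span_coe_preimage ?_)
  intro y hy
  exact h y.1 hy y.2

lemma hom_ext {f g : Subquot P P' →ₗ[ℤ] M''}
    (h : ∀ x (hx : x ∈ P), f (mk P' hx) = g (mk P' hx)) : f = g :=
  hom_ext_span (Submodule.span_eq P) fun x _ hx => h x hx

def map (f : M →ₗ[ℤ] M') (hP : P.map f ≤ Q) (hP' : P'.map f ≤ Q') :
    Subquot P P' →ₗ[ℤ] Subquot Q Q' :=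
  Submodule.mapQ _ _ (f.restrict fun _ hx => hP ⟨_, hx, rfl⟩) fun _ hx => hP' ⟨_, hx, rfl⟩

lemma map_mk (f : M →ₗ[ℤ] M') (hP : P.map f ≤ Q) (hP' : P'.map f ≤ Q') {x : M}
    (hx : x ∈ P) : map f hP hP' (mk P' hx) = mk Q' (hP ⟨x, hx, rfl⟩) := rfl

def inclusion {R R' : Submodule ℤ M} (hP : P ≤ R) (hP' : P' ≤ R') :
    Subquot P P' →ₗ[ℤ] Subquot R R' :=
  Submodule.mapQ _ _ (Submodule.inclusion hP) fun _ hx => hP' hx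

lemma inclusion_mk {R R' : Submodule ℤ M} (hP : P ≤ R) (hP' : P' ≤ R') {x : M}
    (hx : x ∈ P) : inclusion hP hP' (mk P' hx) = mk R' (hP hx) := rfl

def lift (f : M →ₗ[ℤ] M'') (h : P' ≤ LinearMap.ker f) : Subquot P P' →ₗ[ℤ] M'' :=
  Submodule.liftQ _ (f ∘ₗ P.subtype) fun _ hx => h hx

lemma lift_mk (f : M →ₗ[ℤ] M'') (h : P' ≤ LinearMap.ker f) {x : M} (hx : x ∈ P) :
    lift f h (mk P' hx) = f x := rfl

end Subquot

end Subquot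

section Augmentation

variable {G G' : Type*} [Group G] [Group G']

lemma of_sub_one_mem_relAug {H : Subgroup G} {h : G} (hh : h ∈ H) :
    of ℤ G h - 1 ∈ relAug G H :=
  Submodule.subset_span ⟨h, hh, rfl⟩

lemma augI_eq_relAug_top : augI G = relAug G ⊤ := by
  simp [augI, relAug]

lemma of_sub_one_mem_augI (g : G) : of ℤ G g - 1 ∈ augI G :=
  Submodule.subset_span ⟨g, rfl⟩

lemma relAug_le_augI (H : Subgroup G) : relAug G H ≤ augI G :=
  augI_eq_relAug_top (G := G) ▸ Submodule.span_mono fun _ ⟨h, _, hx⟩ => ⟨h, trivial, hx⟩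

lemma of_mul_sub_one (g h : G) :
    of ℤ G (g * h) - 1
      = (of ℤ G g - 1) * (of ℤ G h - 1) + (of ℤ G g - 1) + (of ℤ G h - 1) := by
  rw [map_mul]; noncomm_ring

lemma mapDomainAlgHom_of_sub_one (f : G →* G') (g : G) :
    mapDomainAlgHom ℤ ℤ f (of ℤ G g - 1) = of ℤ G' (f g) - 1 := by
  rw [map_sub, map_one]
  simp [of_apply, mapDomain_single]

lemma map_relAug_le (f : G →* G') {H : Subgroup G} {K : Subgroup G'}
    (hf : ∀ h ∈ H, f h ∈ K) :
    (relAug G H).map (mapDomainAlgHom ℤ ℤ f).toLinearMap ≤ relAug G' K := by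
  rw [relAug, Submodule.map_span, Submodule.span_le]
  rintro _ ⟨_, ⟨h, hh, rfl⟩, rfl⟩
  rw [AlgHom.toLinearMap_apply, mapDomainAlgHom_of_sub_one]
  exact of_sub_one_mem_relAug (hf h hh)

lemma map_augI_le (f : G →* G') {K : Subgroup G'} (hf : ∀ g, f g ∈ K) :
    (augI G).map (mapDomainAlgHom ℤ ℤ f).toLinearMap ≤ relAug G' K :=
  augI_eq_relAug_top (G := G) ▸ map_relAug_le f fun g _ => hf g

lemma Subalgebra.toSubmodule_pow_le {R A : Type*} [CommSemiring R] [Semiring A] [Algebra R A]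
    (S : Subalgebra R A) (n : ℕ) : S.toSubmodule ^ n ≤ S.toSubmodule := by
  cases n with
  | zero => exact Submodule.one_le.2 (one_mem S)
  | succ n => exact (S.isIdempotentElem_toSubmodule.pow_succ_eq n).le

lemma mapDomainAlgHom_eq_self_of_mem_relAug_pow {f : G →* G} {H : Subgroup G}
    (hf : ∀ h ∈ H, f h = h) (n : ℕ) {x : MonoidAlgebra ℤ G} (hx : x ∈ relAug G H ^ n) :
    mapDomainAlgHom ℤ ℤ f x = x := by
  suffices relAug G H ≤ (AlgHom.equalizer (mapDomainAlgHom ℤ ℤ f) (.id ℤ _)).toSubmodule by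
    exact Subalgebra.toSubmodule_pow_le _ n (pow_le_pow_left' this n hx)
  rw [relAug, Submodule.span_le]
  rintro _ ⟨h, hh, rfl⟩
  change mapDomainAlgHom ℤ ℤ f _ = _
  rw [mapDomainAlgHom_of_sub_one, hf h hh]
  rfl

end Augmentation

section Biadditive

variable {G H P : Type*} [Group G] [Group H] [AddCommGroup P] (c : G → H → P)
  (hl : ∀ g g' h, c (g * g') h = c g h + c g' h) (hr : ∀ g h h', c g (h * h') = c g h + c g h')

noncomputable def Abelianization.tensorLift :
    Additive (Abelianization G) ⊗[ℤ] Additive (Abelianization H) →+ P :=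
  let inner (g : G) : Additive (Abelianization H) →+ P := MonoidHom.toAdditiveLeft
    (Abelianization.lift (MonoidHom.mk' (fun h => Multiplicative.ofAdd (c g h)) (hr g)))
  let outer : G →* Multiplicative (Additive (Abelianization H) →+ P) :=
    MonoidHom.mk' (fun g => Multiplicative.ofAdd (inner g)) fun g g' => by
      refine congrArg Multiplicative.ofAdd (AddMonoidHom.ext fun x => ?_)
      induction x using Additive.rec with | _ x
      exact QuotientGroup.induction_on x fun h => hl g g' h
  TensorProduct.liftAddHom (MonoidHom.toAdditiveLeft (Abelianization.lift outer))
    fun r m n => by simp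

lemma Abelianization.tensorLift_tmul (g : G) (h : H) :
    tensorLift c hl hr (Additive.ofMul (of g) ⊗ₜ Additive.ofMul (of h)) = c g h := rfl

end Biadditive

section LinearExtend

variable {G M : Type*} [Group G] [AddCommGroup M]

noncomputable def linearExtend (f : G → M) : MonoidAlgebra ℤ G →ₗ[ℤ] M :=
  Finsupp.linearCombination ℤ f ∘ₗ (coeffLinearEquiv ℤ).toLinearMap

lemma linearExtend_of (f : G → M) (g : G) : linearExtend f (of ℤ G g) = f g := by
  simp [linearExtend, of_apply]

variable (δ : G →* Multiplicative M)

lemma linearExtend_of_sub_one (g : G) :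
    linearExtend (Multiplicative.toAdd ∘ δ) (of ℤ G g - 1) = (δ g).toAdd := by
  rw [map_sub, ← map_one (of ℤ G), linearExtend_of, linearExtend_of]
  simp

lemma augI_sq_le_ker_linearExtend :
    augI G ^ 2 ≤ LinearMap.ker (linearExtend (Multiplicative.toAdd ∘ δ)) := by
  rw [pow_two, augI, Submodule.span_mul_span, Submodule.span_le]
  rintro _ ⟨_, ⟨g, rfl⟩, _, ⟨h, rfl⟩, rfl⟩
  have : (of ℤ G g - 1) * (of ℤ G h - 1)
      = (of ℤ G (g * h) - 1) - (of ℤ G g - 1) - (of ℤ G h - 1) := by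
    rw [of_mul_sub_one]; abel
  change linearExtend _ ((of ℤ G g - 1) * (of ℤ G h - 1)) = 0
  rw [this, map_sub, map_sub, linearExtend_of_sub_one,
    linearExtend_of_sub_one, linearExtend_of_sub_one, map_mul, toAdd_mul]
  abel

lemma relAug_le_ker_linearExtend {H : Subgroup G} (hδ : ∀ h ∈ H, δ h = 1) :
    relAug G H ≤ LinearMap.ker (linearExtend (Multiplicative.toAdd ∘ δ)) := by
  rw [relAug, Submodule.span_le]
  rintro _ ⟨h, hh, rfl⟩
  rw [SetLike.mem_coe, LinearMap.mem_ker, linearExtend_of_sub_one, hδ h hh, toAdd_one]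

noncomputable def tensorChar {C : Type*} [CommGroup C] (φ : G →* C) :
    MonoidAlgebra ℤ G →ₗ[ℤ] M ⊗[ℤ] Additive C :=
  linearExtend fun g => (δ g).toAdd ⊗ₜ[ℤ] Additive.ofMul (φ g)

lemma tensorChar_mul_of_sub_one {C : Type*} [CommGroup C] (φ : G →* C) {t : G}
    (ht : δ t = 1) (x : MonoidAlgebra ℤ G) :
    tensorChar δ φ (x * (of ℤ G t - 1))
      = linearExtend (Multiplicative.toAdd ∘ δ) x ⊗ₜ[ℤ] Additive.ofMul (φ t) := by
  induction x using MonoidAlgebra.induction_on with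
  | of g =>
    rw [tensorChar, mul_sub, mul_one, ← map_mul, map_sub, linearExtend_of, linearExtend_of,
      linearExtend_of]
    simp [ht, tmul_add]
  | add x y hx hy => rw [add_mul, map_add, hx, hy, map_add, add_tmul]
  | smul r x hx => rw [smul_mul_assoc, map_smul, hx, map_smul, smul_tmul']

lemma mul_relAug_le_ker_tensorChar {C : Type*} [CommGroup C] (φ : G →* C)
    {H : Subgroup G} (hδ : ∀ h ∈ H, δ h = 1) {P : Submodule ℤ (MonoidAlgebra ℤ G)}
    (hP : P ≤ LinearMap.ker (linearExtend (Multiplicative.toAdd ∘ δ))) :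
    P * relAug G H ≤ LinearMap.ker (tensorChar δ φ) := by
  refine Submodule.mul_le.2 fun x hx y hy => ?_
  suffices relAug G H ≤ LinearMap.ker (tensorChar δ φ ∘ₗ LinearMap.mulLeft ℤ x) from
    this hy
  rw [relAug, Submodule.span_le]
  rintro _ ⟨h, hh, rfl⟩
  rw [SetLike.mem_coe, LinearMap.mem_ker, LinearMap.comp_apply, LinearMap.mulLeft_apply,
    tensorChar_mul_of_sub_one δ φ (hδ h hh), LinearMap.mem_ker.1 (hP hx), zero_tmul]

end LinearExtend

section Commutator

variable {G : Type*} [Group G] {N : Subgroup G}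

lemma map_conj_eq_of_commutator_le_ker {M : Type*} [Group M] (α : N →* M)
    (hα : (⁅N, ⊤⁆ : Subgroup G).subgroupOf N ≤ α.ker) (g : G) (n : N)
    (hgn : g * n * g⁻¹ ∈ N) : α ⟨g * n * g⁻¹, hgn⟩ = α n := by
  rw [← mul_inv_eq_one, ← map_inv, ← map_mul]
  apply hα
  rw [Subgroup.mem_subgroupOf, Subgroup.commutator_comm]
  simpa [commutatorElement_def, mul_assoc] using
    Subgroup.commutator_mem_commutator (Subgroup.mem_top g) n.2

end Commutator

section SemidirectDecomposition

open SemidirectProduct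

variable {G : Type*} [Group G] {N T : Subgroup G} [N.Normal] (hc : N.IsComplement' T)

lemma mulEquivSubgroup_symm_of_mem_left {n : G} (hn : n ∈ N) :
    (mulEquivSubgroup hc).symm n = inl ⟨n, hn⟩ :=
  (MulEquiv.symm_apply_eq _).2 (by simp)

lemma mulEquivSubgroup_symm_of_mem_right {t : G} (ht : t ∈ T) :
    (mulEquivSubgroup hc).symm t = inr ⟨t, ht⟩ :=
  (MulEquiv.symm_apply_eq _).2 (by simp)

noncomputable def complRight : G →* T :=
  rightHom.comp (mulEquivSubgroup hc).symm.toMonoidHom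

noncomputable def complLeft (g : G) : N := ((mulEquivSubgroup hc).symm g).left

lemma complLeft_mul_complRight (g : G) : (complLeft hc g : G) * complRight hc g = g := by
  simpa [complLeft, complRight] using (mulEquivSubgroup hc).apply_symm_apply g

lemma complRight_of_mem_left {n : G} (hn : n ∈ N) : complRight hc n = 1 := by
  simp [complRight, mulEquivSubgroup_symm_of_mem_left hc hn]

lemma complRight_of_mem_right {t : G} (ht : t ∈ T) : complRight hc t = ⟨t, ht⟩ := by
  simp [complRight, mulEquivSubgroup_symm_of_mem_right hc ht]

variable {A : Type*} [AddCommGroup A] (α : N →* Multiplicative A)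
  (hα : (⁅N, ⊤⁆ : Subgroup G).subgroupOf N ≤ α.ker)

-- `n t ↦ α n`.
noncomputable def complExtend : G →* Multiplicative A :=
  (SemidirectProduct.lift α 1 fun t => by
    exact MonoidHom.ext fun n =>
      (map_conj_eq_of_commutator_le_ker α hα t n _).trans (by simp)).comp
    (mulEquivSubgroup hc).symm.toMonoidHom

lemma complExtend_apply (g : G) : complExtend hc α hα g = α (complLeft hc g) := by
  simp [complExtend, complLeft, SemidirectProduct.lift]

lemma complExtend_of_mem_left {n : G} (hn : n ∈ N) :
    complExtend hc α hα n = α ⟨n, hn⟩ := by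
  simp [complExtend, mulEquivSubgroup_symm_of_mem_left hc hn]

lemma complExtend_of_mem_right {t : G} (ht : t ∈ T) : complExtend hc α hα t = 1 := by
  simp [complExtend, mulEquivSubgroup_symm_of_mem_right hc ht]

end SemidirectDecomposition

section Pairing

abbrev Q₂ (G : Type*) [Group G] (T : Subgroup G) : Type _ :=
  Subquot (augI G * relAug G T) (augI G ^ 2 * relAug G T)

-- `I(T)²/I(T)³`, which realizes `U₂L(T)`.
abbrev Gr₂ (G : Type*) [Group G] (T : Subgroup G) : Type _ :=
  Subquot (relAug G T ^ 2) (relAug G T ^ 3)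

variable {G : Type*} [Group G] {T : Subgroup G}

noncomputable def pairingClass (g : G) (t : T) : Q₂ G T :=
  Subquot.mk _ (Submodule.mul_mem_mul (of_sub_one_mem_augI g) (of_sub_one_mem_relAug t.2))

lemma pairingClass_mul_left (g g' : G) (t : T) :
    pairingClass (g * g') t = pairingClass g t + pairingClass g' t := by
  rw [pairingClass, pairingClass, pairingClass, Subquot.mk_add, Subquot.mk_eq_mk_iff,
    of_mul_sub_one]
  have : (of ℤ G g - 1) * (of ℤ G g' - 1) * (of ℤ G t - 1) ∈ augI G ^ 2 * relAug G T :=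
    Submodule.mul_mem_mul (pow_two (augI G) ▸ Submodule.mul_mem_mul (of_sub_one_mem_augI g)
      (of_sub_one_mem_augI g')) (of_sub_one_mem_relAug t.2)
  convert this using 1
  noncomm_ring

lemma pairingClass_mul_right (g : G) (t t' : T) :
    pairingClass g (t * t') = pairingClass g t + pairingClass g t' := by
  rw [pairingClass, pairingClass, pairingClass, Subquot.mk_add, Subquot.mk_eq_mk_iff,
    Subgroup.coe_mul, of_mul_sub_one]
  have : (of ℤ G g - 1) * (of ℤ G t - 1) * (of ℤ G t' - 1) ∈ augI G ^ 2 * relAug G T :=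
    Submodule.mul_mem_mul (pow_two (augI G) ▸ Submodule.mul_mem_mul (of_sub_one_mem_augI g)
      (relAug_le_augI T (of_sub_one_mem_relAug t.2))) (of_sub_one_mem_relAug t'.2)
  convert this using 1
  noncomm_ring

end Pairing

section Decomposition

variable {G A : Type*} [Group G] [AddCommGroup A]

lemma relAug_sq_le_augI_mul_relAug (T : Subgroup G) : relAug G T ^ 2 ≤ augI G * relAug G T :=
  pow_two (relAug G T) ▸ mul_le_mul' (relAug_le_augI T) le_rfl

lemma relAug_pow_three_le_augI_sq_mul_relAug (T : Subgroup G) :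
    relAug G T ^ 3 ≤ augI G ^ 2 * relAug G T :=
  pow_succ (relAug G T) 2 ▸ mul_le_mul' (pow_le_pow_left' (relAug_le_augI T) 2) le_rfl

noncomputable def ofGr₂ (T : Subgroup G) : Gr₂ G T →ₗ[ℤ] Q₂ G T :=
  Subquot.inclusion (relAug_sq_le_augI_mul_relAug T) (relAug_pow_three_le_augI_sq_mul_relAug T)

section OfTensor

variable {N T : Subgroup G} (α : N →* Multiplicative A) (hsurj : Function.Surjective α)

include hsurj in
lemma tensor_ext_of_surjective {M : Type*} [AddCommGroup M]
    {f g : A ⊗[ℤ] Additive (Abelianization T) →ₗ[ℤ] M}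
    (h : ∀ n t, f ((α n).toAdd ⊗ₜ Additive.ofMul (Abelianization.of t))
      = g ((α n).toAdd ⊗ₜ Additive.ofMul (Abelianization.of t))) : f = g := by
  refine TensorProduct.ext' fun a b => ?_
  obtain ⟨n, hn⟩ := hsurj (Multiplicative.ofAdd a)
  induction b using Additive.rec with | _ b
  obtain ⟨t, rfl⟩ := QuotientGroup.mk_surjective b
  obtain rfl : (α n).toAdd = a := by simp [hn]
  exact h n t

lemma ker_le_ker_abelianizationOf (hker : α.ker ≤ (commutator G).subgroupOf N) :
    α.ker ≤ (Abelianization.of.comp N.subtype).ker := fun n hn => by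
  have := hker hn
  rwa [Subgroup.mem_subgroupOf, ← Abelianization.ker_of, MonoidHom.mem_ker] at this

noncomputable def ofTensor (hker : α.ker ≤ (commutator G).subgroupOf N) :
    A ⊗[ℤ] Additive (Abelianization T) →ₗ[ℤ] Q₂ G T :=
  ((Abelianization.tensorLift pairingClass pairingClass_mul_left pairingClass_mul_right).comp
    (TensorProduct.map (MonoidHom.toAdditiveRight (α.liftOfSurjective hsurj
      ⟨Abelianization.of.comp N.subtype, ker_le_ker_abelianizationOf α hker⟩)).toIntLinearMap
      LinearMap.id).toAddMonoidHom).toIntLinearMap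

lemma ofTensor_tmul (hker : α.ker ≤ (commutator G).subgroupOf N) (n : N) (t : T) :
    ofTensor α hsurj hker ((α n).toAdd ⊗ₜ Additive.ofMul (Abelianization.of t))
      = pairingClass (n : G) t := by
  simp [ofTensor, Abelianization.tensorLift_tmul]

end OfTensor

variable {N T : Subgroup G} [N.Normal] (hc : N.IsComplement' T)

noncomputable def complRightAlgHom : MonoidAlgebra ℤ G →ₐ[ℤ] MonoidAlgebra ℤ G :=
  mapDomainAlgHom ℤ ℤ (T.subtype.comp (complRight hc))

lemma map_augI_complRightAlgHom_le :
    (augI G).map (complRightAlgHom hc).toLinearMap ≤ relAug G T :=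
  map_augI_le _ fun g => (complRight hc g).2

lemma map_relAug_complRightAlgHom_le :
    (relAug G T).map (complRightAlgHom hc).toLinearMap ≤ relAug G T :=
  map_relAug_le _ fun g _ => (complRight hc g).2

noncomputable def toGr₂ : Q₂ G T →ₗ[ℤ] Gr₂ G T :=
  Subquot.map (complRightAlgHom hc).toLinearMap
    (by
      rw [Submodule.map_mul, pow_two]
      exact mul_le_mul' (map_augI_complRightAlgHom_le hc) (map_relAug_complRightAlgHom_le hc))
    (by
      rw [Submodule.map_mul, Submodule.map_pow, pow_succ]
      exact mul_le_mul' (pow_le_pow_left' (map_augI_complRightAlgHom_le hc) 2)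
        (map_relAug_complRightAlgHom_le hc))

variable (α : N →* Multiplicative A) (hα : (⁅N, ⊤⁆ : Subgroup G).subgroupOf N ≤ α.ker)

noncomputable def toTensor : Q₂ G T →ₗ[ℤ] A ⊗[ℤ] Additive (Abelianization T) :=
  Subquot.lift (tensorChar (complExtend hc α hα) (Abelianization.of.comp (complRight hc)))
    (mul_relAug_le_ker_tensorChar _ _ (fun _ => complExtend_of_mem_right hc α hα)
      (augI_sq_le_ker_linearExtend _))

lemma complRightAlgHom_of_sub_one (g : G) :
    complRightAlgHom hc (of ℤ G g - 1) = of ℤ G (complRight hc g) - 1 :=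
  mapDomainAlgHom_of_sub_one _ g

lemma toGr₂_comp_ofGr₂ : toGr₂ hc ∘ₗ ofGr₂ T = LinearMap.id := by
  refine Subquot.hom_ext fun x hx => ?_
  rw [LinearMap.comp_apply, ofGr₂, Subquot.inclusion_mk, toGr₂, Subquot.map_mk,
    LinearMap.id_apply]
  exact Subquot.mk_congr _ _ (mapDomainAlgHom_eq_self_of_mem_relAug_pow
    (fun t ht => by simp [complRight_of_mem_right hc ht]) 2 hx)

lemma toTensor_comp_ofGr₂ : toTensor hc α hα ∘ₗ ofGr₂ T = 0 := by
  refine Subquot.hom_ext fun x hx => ?_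
  rw [LinearMap.comp_apply, ofGr₂, Subquot.inclusion_mk, toTensor, Subquot.lift_mk,
    LinearMap.zero_apply]
  exact mul_relAug_le_ker_tensorChar _ _ (fun _ => complExtend_of_mem_right hc α hα)
    (relAug_le_ker_linearExtend _ fun _ => complExtend_of_mem_right hc α hα)
    (pow_two (relAug G T) ▸ hx)

variable (hsurj : Function.Surjective α) (hker : α.ker ≤ (commutator G).subgroupOf N)

lemma toGr₂_comp_ofTensor : toGr₂ hc ∘ₗ ofTensor α hsurj hker = 0 := by
  refine tensor_ext_of_surjective α hsurj fun n t => ?_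
  rw [LinearMap.comp_apply, ofTensor_tmul, pairingClass, toGr₂, Subquot.map_mk,
    LinearMap.zero_apply, Subquot.mk_eq_zero_iff, AlgHom.toLinearMap_apply, map_mul,
    complRightAlgHom_of_sub_one,
    complRight_of_mem_left hc n.2, OneMemClass.coe_one, map_one, sub_self, zero_mul]
  exact zero_mem _

lemma toTensor_comp_ofTensor : toTensor hc α hα ∘ₗ ofTensor α hsurj hker = LinearMap.id := by
  refine tensor_ext_of_surjective α hsurj fun n t => ?_
  rw [LinearMap.comp_apply, ofTensor_tmul, pairingClass, toTensor, Subquot.lift_mk,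
    tensorChar_mul_of_sub_one _ _ (complExtend_of_mem_right hc α hα t.2), linearExtend_of_sub_one,
    complExtend_of_mem_left hc α hα n.2, MonoidHom.comp_apply, complRight_of_mem_right hc t.2,
    LinearMap.id_apply]

lemma ofGr₂_comp_toGr₂_add_ofTensor_comp_toTensor :
    ofGr₂ T ∘ₗ toGr₂ hc + ofTensor α hsurj hker ∘ₗ toTensor hc α hα
      = LinearMap.id := by
  refine Subquot.hom_ext_span (Submodule.span_mul_span ℤ _ _).symm ?_
  rintro _ ⟨_, ⟨g, rfl⟩, _, ⟨t, ht, rfl⟩, rfl⟩ hx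
  have hproj : ofGr₂ T (toGr₂ hc (Subquot.mk _ hx))
      = pairingClass (complRight hc g : G) ⟨t, ht⟩ := by
    rw [toGr₂, Subquot.map_mk, ofGr₂, Subquot.inclusion_mk, pairingClass]
    refine Subquot.mk_congr _ _ ?_
    rw [AlgHom.toLinearMap_apply, map_mul, complRightAlgHom_of_sub_one, complRightAlgHom_of_sub_one,
      complRight_of_mem_right hc ht]
  have hleft : toTensor hc α hα (Subquot.mk _ hx)
      = (α (complLeft hc g)).toAdd ⊗ₜ Additive.ofMul (Abelianization.of ⟨t, ht⟩) := by
    rw [toTensor, Subquot.lift_mk,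
      tensorChar_mul_of_sub_one _ _ (complExtend_of_mem_right hc α hα ht),
      linearExtend_of_sub_one, complExtend_apply, MonoidHom.comp_apply,
      complRight_of_mem_right hc ht]
  rw [LinearMap.add_apply, LinearMap.comp_apply, LinearMap.comp_apply, hproj, hleft, ofTensor_tmul,
    add_comm, ← pairingClass_mul_left, complLeft_mul_complRight]
  rfl

noncomputable def q₂Equiv :
    Q₂ G T ≃ₗ[ℤ] Gr₂ G T × (A ⊗[ℤ] Additive (Abelianization T)) :=
  LinearEquiv.ofLinearMap ((toGr₂ hc).prod (toTensor hc α hα))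
    ((ofGr₂ T).coprod (ofTensor α hsurj hker))
    (by
      refine LinearMap.prod_ext ?_ ?_
      · rw [LinearMap.comp_assoc, LinearMap.coprod_inl, LinearMap.prod_comp, toGr₂_comp_ofGr₂,
          toTensor_comp_ofGr₂, LinearMap.id_comp, LinearMap.inl_eq_prod]
      · rw [LinearMap.comp_assoc, LinearMap.coprod_inr, LinearMap.prod_comp, toGr₂_comp_ofTensor,
          toTensor_comp_ofTensor, LinearMap.id_comp, LinearMap.inr_eq_prod])
    (by rw [LinearMap.coprod_comp_prod, ofGr₂_comp_toGr₂_add_ofTensor_comp_toTensor])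

end Decomposition

/-- for `G = N ⋊ T`, `Q₂(G,T) = I(G)I(T)/I(G)²I(T)` is naturally
isomorphic to `U₂L(T) ⊕ (N^{AB} ⊗ T^{ab})`.  Here `A` realizes `N^{AB} = N/[N,G]` (via
the surjection `α` with kernel `[N,G]`), `T^{ab}` is the abelianization of `T`, and the
degree-2 part `U₂L(T)` of the enveloping algebra of the Lie ring of `T` is taken in its
canonical realization `I(T)²/I(T)³` (Bachmann–Gruenenfelder: `θ₂ : U₂L(T) ≅ I(T)²/I(T)³`
for every group `T`). -/
theorem stmt17 {G A : Type*} [Group G] [AddCommGroup A]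
    (N T : Subgroup G) [N.Normal] (hdisj : N ⊓ T = ⊥) (hjoin : N ⊔ T = ⊤)
    (α : ↥N → A) (hαadd : ∀ a b : ↥N, α (a * b) = α a + α b)
    (hαsurj : Function.Surjective α)
    (hαker : ∀ a : ↥N, α a = 0 ↔ (a : G) ∈ ⁅N, (⊤ : Subgroup G)⁆) :
    Nonempty
      ((↥(augI G * relAug G T) ⧸
          ((augI G) ^ 2 * relAug G T).comap (augI G * relAug G T).subtype) ≃ₗ[ℤ]
        ((↥((relAug G T) ^ 2) ⧸
            ((relAug G T) ^ 3).comap ((relAug G T) ^ 2).subtype) ×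
          (A ⊗[ℤ] Additive (Abelianization ↥T)))) := by
  have hc : N.IsComplement' T := Subgroup.isComplement'_of_disjoint_and_mul_eq_univ
    (disjoint_iff.2 hdisj) (by rw [← Subgroup.normal_mul, hjoin, Subgroup.coe_top])
  let αHom : N →* Multiplicative A :=
    MonoidHom.mk' (fun n => Multiplicative.ofAdd (α n)) fun a b => congrArg _ (hαadd a b)
  have hker : αHom.ker = (⁅N, ⊤⁆ : Subgroup G).subgroupOf N := by
    ext n
    simp [αHom, Subgroup.mem_subgroupOf, hαker]
  have hcomm : ⁅N, ⊤⁆ ≤ commutator G :=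
    commutator_def G ▸ Subgroup.commutator_mono le_top le_rfl
  exact ⟨q₂Equiv hc αHom hker.ge hαsurj (hker.le.trans (Subgroup.subgroupOf_mono N hcomm))⟩
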